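/- arXiv:math/0503261 — 2 statements merged into one kernel-verified Lean document; each statement's English description precedes it below -/
import Mathlib

section
/- Reversed Cauchy–Schwarz inequality in Minkowski space: if u and v are both timelike vectors (η(u,u) > 0 and η(v,v) > 0), then η(u, v)² ≥ η(u, u)·η(v, v), with equality if and only if u and v are linearly dependent. -/
/-- The Minkowski bilinear form on `ℝ^{n+1}`. -/
def minkForm (n : ℕ) (x y : Fin (n + 1) → ℝ) : ℝ :=
  x 0 * y 0 - ∑ i : Fin n, x i.succ * y i.succ

lemma minkForm_symm (n : ℕ) (x y : Fin (n + 1) → ℝ) :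
    minkForm n x y = minkForm n y x := by
  unfold minkForm
  congr 1
  · ring
  · exact Finset.sum_congr rfl fun i _ => mul_comm _ _

lemma minkForm_add_left (n : ℕ) (x y z : Fin (n + 1) → ℝ) :
    minkForm n (x + y) z = minkForm n x z + minkForm n y z := by
  simp only [minkForm, Pi.add_apply, add_mul, Finset.sum_add_distrib]
  ring

lemma minkForm_smul_left (n : ℕ) (c : ℝ) (x y : Fin (n + 1) → ℝ) :
    minkForm n (c • x) y = c * minkForm n x y := by
  simp only [minkForm, Pi.smul_apply, smul_eq_mul, mul_assoc, mul_sub, Finset.mul_sum]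

lemma minkForm_zero_left (n : ℕ) (y : Fin (n + 1) → ℝ) :
    minkForm n 0 y = 0 := by
  simp [minkForm]

/-- A nonzero vector orthogonal to a timelike vector is spacelike. -/
lemma minkForm_orth_timelike (n : ℕ) (v w : Fin (n + 1) → ℝ)
    (hv : 0 < minkForm n v v) (h : minkForm n w v = 0) :
    minkForm n w w ≤ 0 ∧ (minkForm n w w = 0 → w = 0) := by
  set Svv : ℝ := ∑ i : Fin n, v i.succ * v i.succ with hSvv
  set Sww : ℝ := ∑ i : Fin n, w i.succ * w i.succ with hSww
  set Swv : ℝ := ∑ i : Fin n, w i.succ * v i.succ with hSwv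
  have hv' : Svv < v 0 * v 0 := by
    have := hv; unfold minkForm at this; linarith
  have hw' : w 0 * v 0 = Swv := by
    have := h; unfold minkForm at this; linarith
  have hCS : Swv ^ 2 ≤ Sww * Svv := by
    have := Finset.sum_mul_sq_le_sq_mul_sq Finset.univ
      (fun i : Fin n => w i.succ) (fun i : Fin n => v i.succ)
    simpa [hSww, hSvv, hSwv, sq] using this
  have hSww0 : 0 ≤ Sww := Finset.sum_nonneg fun i _ => mul_self_nonneg _
  have hSvv0 : 0 ≤ Svv := Finset.sum_nonneg fun i _ => mul_self_nonneg _
  have hb : 0 < v 0 * v 0 := lt_of_le_of_lt hSvv0 hv'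
  have hsq : (w 0) ^ 2 * (v 0 * v 0) = Swv ^ 2 := by rw [← hw']; ring
  have hstep : Sww * Svv ≤ Sww * (v 0 * v 0) :=
    mul_le_mul_of_nonneg_left hv'.le hSww0
  have hmain : w 0 * w 0 ≤ Sww := by nlinarith [sq_nonneg (w 0)]
  constructor
  · unfold minkForm; linarith
  · intro heq
    have heq' : w 0 * w 0 = Sww := by
      have := heq; unfold minkForm at this; linarith
    have h3 : (w 0) ^ 2 ≤ 0 := by nlinarith
    have hc0 : w 0 = 0 := by
      have := le_antisymm h3 (sq_nonneg (w 0))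
      exact pow_eq_zero_iff two_ne_zero |>.mp this
    have hSww_eq : Sww = 0 := by rw [← heq', hc0]; ring
    have hall : ∀ i : Fin n, w i.succ = 0 := by
      intro i
      have h2 : ∀ j ∈ Finset.univ, w (Fin.succ j) * w (Fin.succ j) = 0 :=
        (Finset.sum_eq_zero_iff_of_nonneg
          (fun j _ => mul_self_nonneg (w (Fin.succ j)))).mp hSww_eq
      exact mul_self_eq_zero.mp (h2 i (Finset.mem_univ i))
    funext j
    refine Fin.cases ?_ ?_ j
    · exact hc0
    · exact hall

/-- Reversed Cauchy–Schwarz inequality: for timelike `u`, `v`,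
`η(u,v)² ≥ η(u,u)η(v,v)`, with equality iff `u`, `v` are linearly dependent. -/
theorem minkowski_reversed_cauchy_schwarz (n : ℕ) (u v : Fin (n + 1) → ℝ)
    (hu : 0 < minkForm n u u) (hv : 0 < minkForm n v v) :
    minkForm n u u * minkForm n v v ≤ (minkForm n u v) ^ 2 ∧
    ((minkForm n u v) ^ 2 = minkForm n u u * minkForm n v v ↔
      ¬ LinearIndependent ℝ ![u, v]) := by
  set A := minkForm n u u with hA
  set B := minkForm n u v with hB
  set C := minkForm n v v with hC
  set w : Fin (n + 1) → ℝ := C • u + (-B) • v with hw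
  have hwv : minkForm n w v = 0 := by
    rw [hw, minkForm_add_left, minkForm_smul_left, minkForm_smul_left]
    ring
  have hwu : minkForm n w u = C * A - B * B := by
    rw [hw, minkForm_add_left, minkForm_smul_left, minkForm_smul_left,
      minkForm_symm n v u]
    ring
  have hww : minkForm n w w = C * (C * A - B * B) := by
    rw [hw, minkForm_add_left, minkForm_smul_left, minkForm_smul_left]
    rw [minkForm_symm n u w, minkForm_symm n v w] at *
    rw [show minkForm n w u = C * A - B * B from hwu,
      show minkForm n w v = 0 from hwv]
    ring
  obtain ⟨hle, heq0⟩ := minkForm_orth_timelike n v w hv hwv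
  rw [hww] at hle heq0
  have hineq : A * C ≤ B ^ 2 := by nlinarith
  refine ⟨hineq, ?_, ?_⟩
  · -- equality → dependent
    intro he
    have hw0 : w = 0 := heq0 (by nlinarith)
    intro hli
    have := (LinearIndependent.pair_iff.mp hli C (-B) (by rw [← hw]; exact hw0)).1
    exact absurd this (ne_of_gt hv)
  · -- dependent → equality
    intro hdep
    rw [LinearIndependent.pair_iff] at hdep
    push_neg at hdep
    obtain ⟨s, t, hst, hne⟩ := hdep
    have h1 : s * A + t * B = 0 := by
      have := congrArg (fun x => minkForm n x u) hst
      simpa [minkForm_add_left, minkForm_smul_left, minkForm_zero_left,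
        minkForm_symm n v u, ← hA, ← hB] using this
    have h2 : s * B + t * C = 0 := by
      have := congrArg (fun x => minkForm n x v) hst
      simpa [minkForm_add_left, minkForm_smul_left, minkForm_zero_left,
        ← hB, ← hC] using this
    have hs : s * (A * C - B * B) = 0 := by linear_combination C * h1 - B * h2
    have ht : t * (A * C - B * B) = 0 := by linear_combination A * h2 - B * h1
    rcases mul_eq_zero.mp hs with h | h
    · have ht' := hne h
      rcases mul_eq_zero.mp ht with h' | h'
      · exact absurd h' ht'
      · nlinarith
    · nlinarith
end

section
/- The region outside the closed unit disk in the Euclidean plane is not intrinsically flat near the disk: there exist points P, Q with ‖P‖ > 1 and ‖Q‖ > 1 such that every continuous path from P to Q staying in {r : ‖r‖ > 1} has length strictly greater than ‖P − Q‖. -/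
/-!
A path from `v` to `-v` must cross the hyperplane orthogonal to `v`, at some point `r`. If the
path avoids the origin then `r ≠ 0`, and Pythagoras gives `‖v‖ < ‖v - r‖` and `‖v‖ < ‖r + v‖`, so
the path is longer than `2 ‖v‖ = ‖v - (-v)‖`. Points outside the unit disk are a special case.
-/

open Set

theorem eVariationOn.edist_add_edist_le {α E : Type*} [LinearOrder α] [PseudoEMetricSpace E]
    (f : α → E) {a t b : α} (hat : a ≤ t) (htb : t ≤ b) :
    edist (f a) (f t) + edist (f t) (f b) ≤ eVariationOn f (Icc a b) := by
  have hsplit := eVariationOn.Icc_add_Icc f (s := Icc a b) hat htb ⟨hat, htb⟩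
  simp only [Icc_inter_Icc, max_self, min_self, min_eq_right htb, max_eq_right hat] at hsplit
  rw [← hsplit]
  exact add_le_add (eVariationOn.edist_le f ⟨le_rfl, hat⟩ ⟨hat, le_rfl⟩)
    (eVariationOn.edist_le f ⟨le_rfl, htb⟩ ⟨htb, le_rfl⟩)

section InnerProductSpace

variable {E : Type*} [NormedAddCommGroup E] [InnerProductSpace ℝ E]

theorem exists_inner_eq_zero_of_continuousOn_of_eq_neg {γ : ℝ → E} {a b : ℝ} {v : E}
    (hab : a ≤ b) (hγ : ContinuousOn γ (Icc a b)) (ha : γ a = v) (hb : γ b = -v) :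
    ∃ t ∈ Icc a b, inner ℝ (γ t) v = 0 := by
  have hcont : ContinuousOn (fun s => inner ℝ (γ s) v) (Icc a b) :=
    hγ.inner continuousOn_const
  have hzero : (0 : ℝ) ∈ Icc (inner ℝ (γ b) v) (inner ℝ (γ a) v) := by
    rw [ha, hb, inner_neg_left, real_inner_self_eq_norm_sq]
    exact ⟨by simp, sq_nonneg _⟩
  exact intermediate_value_Icc' hab hcont hzero

theorem norm_lt_norm_add_of_inner_eq_zero {r v : E} (hr : r ≠ 0) (h : inner ℝ r v = 0) :
    ‖v‖ < ‖r + v‖ := by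
  have hpyth := norm_add_sq_eq_norm_sq_add_norm_sq_real h
  have hpos : 0 < ‖r‖ := norm_pos_iff.2 hr
  nlinarith [norm_nonneg v, norm_nonneg (r + v)]

theorem edist_neg_lt_eVariationOn {γ : ℝ → E} {a b : ℝ} {v : E} (hab : a ≤ b)
    (hγ : ContinuousOn γ (Icc a b)) (ha : γ a = v) (hb : γ b = -v)
    (havoid : ∀ t ∈ Icc a b, γ t ≠ 0) :
    edist v (-v) < eVariationOn γ (Icc a b) := by
  obtain ⟨t, ht, horth⟩ := exists_inner_eq_zero_of_continuousOn_of_eq_neg hab hγ ha hb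
  have hfirst : ‖v‖ < ‖v - γ t‖ := by
    rw [sub_eq_neg_add]
    exact norm_lt_norm_add_of_inner_eq_zero (neg_ne_zero.2 (havoid t ht))
      (by rw [inner_neg_left, horth, neg_zero])
  have hsecond : ‖v‖ < ‖γ t - -v‖ := by
    rw [sub_neg_eq_add]
    exact norm_lt_norm_add_of_inner_eq_zero (havoid t ht) horth
  have hdiam : ‖v - -v‖ = 2 * ‖v‖ := by
    rw [sub_neg_eq_add, ← two_smul ℝ, norm_smul, Real.norm_two]
  have hreal : dist v (-v) < dist v (γ t) + dist (γ t) (-v) := by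
    rw [dist_eq_norm, dist_eq_norm, dist_eq_norm, hdiam]
    linarith
  calc edist v (-v) < edist v (γ t) + edist (γ t) (-v) := by
        rw [edist_dist, edist_dist, edist_dist, ← ENNReal.ofReal_add dist_nonneg dist_nonneg]
        exact (ENNReal.ofReal_lt_ofReal_iff_of_nonneg dist_nonneg).2 hreal
    _ ≤ eVariationOn γ (Icc a b) := by
        simpa only [ha, hb] using eVariationOn.edist_add_edist_le γ ht.1 ht.2

end InnerProductSpace

/-- The exterior of the closed unit disk in the Euclidean plane is not convex:
there exist points `P`, `Q` outside the disk such that every continuous path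
between them staying outside the disk is strictly longer than `‖P − Q‖`. -/
theorem exterior_of_disk_not_flat :
    ∃ P Q : EuclideanSpace ℝ (Fin 2), 1 < ‖P‖ ∧ 1 < ‖Q‖ ∧
      ∀ γ : ℝ → EuclideanSpace ℝ (Fin 2),
        ContinuousOn γ (Set.Icc 0 1) → γ 0 = P → γ 1 = Q →
        (∀ t ∈ Set.Icc (0 : ℝ) 1, 1 < ‖γ t‖) →
        ENNReal.ofReal ‖P - Q‖ < eVariationOn γ (Set.Icc 0 1) := by
  set P : EuclideanSpace ℝ (Fin 2) := EuclideanSpace.single 0 2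
  have hP : ‖P‖ = 2 := by simp [P]
  refine ⟨P, -P, by norm_num [hP], by norm_num [hP], ?_⟩
  intro γ hγ h0 h1 hout
  rw [← dist_eq_norm, ← edist_dist]
  exact edist_neg_lt_eVariationOn zero_le_one hγ h0 h1
    fun t ht => norm_pos_iff.1 (one_pos.trans (hout t ht))
end
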